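/- Let X and Y be independent random variables with mean zero and Var(X+Y) = B² (B > 0), and suppose X+Y has a density with finite relative entropy D(X+Y) to the normal law N(0,B²). Then for all T ≥ 0, (1/B²) E[X² 1_{|X| ≥ T}] ≤ 16 D(X+Y) + 16 e^{−T²/(8B²)}. -/

import Mathlib

open Real MeasureTheory Set ProbabilityTheory
open scoped ENNReal NNReal

/-- Density of N(0,B²). -/
noncomputable def normalDensity (B : ℝ) (x : ℝ) : ℝ :=
  (B * Real.sqrt (2 * Real.pi))⁻¹ * Real.exp (-x ^ 2 / (2 * B ^ 2))

namespace Stmt14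

lemma normalDensity_pos {B : ℝ} (hB : 0 < B) (x : ℝ) : 0 < normalDensity B x := by
  have h2π : 0 < Real.sqrt (2 * Real.pi) := Real.sqrt_pos.2 (by positivity)
  unfold normalDensity
  positivity

lemma normalDensity_eq {B : ℝ} (hB : 0 < B) :
    normalDensity B = fun x => (B * Real.sqrt (2 * Real.pi))⁻¹ *
      Real.exp (-(1/(2*B^2)) * x ^ 2) := by
  funext x
  unfold normalDensity
  congr 1
  congr 1
  field_simp

lemma integrable_normalDensity {B : ℝ} (hB : 0 < B) :
    Integrable (normalDensity B) := by
  rw [normalDensity_eq hB]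
  exact (integrable_exp_neg_mul_sq (by positivity)).const_mul _

lemma integral_normalDensity {B : ℝ} (hB : 0 < B) :
    ∫ x, normalDensity B x = 1 := by
  rw [normalDensity_eq hB]
  rw [MeasureTheory.integral_const_mul, integral_gaussian]
  have h1 : Real.pi / (1/(2*B^2)) = B^2 * (2 * Real.pi) := by field_simp
  rw [h1, Real.sqrt_mul (sq_nonneg B), Real.sqrt_sq hB.le]
  rw [inv_mul_cancel₀]
  positivity


lemma tail_bound {α s : ℝ} (hα : 0 < α) (hs : 0 < s) :
    ∫ x in {x : ℝ | s ≤ |x|}, Real.exp (-α * x ^ 2)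
      ≤ Real.exp (-α * s ^ 2) / (α * s) := by
  have hint : Integrable (fun x : ℝ => Real.exp (-α * x ^ 2)) := integrable_exp_neg_mul_sq hα
  have hset : {x : ℝ | s ≤ |x|} = Iic (-s) ∪ Ici s := by
    ext x
    simp only [mem_setOf_eq, mem_union, mem_Iic, mem_Ici, le_abs]
    constructor
    · rintro (h | h)
      · right; exact h
      · left; linarith
    · rintro (h | h)
      · right; linarith
      · left; exact h
  have hdisj : Disjoint (Iic (-s)) (Ici s) := by
    apply Iic_disjoint_Ici.2
    linarith
  rw [hset, setIntegral_union hdisj measurableSet_Ici hint.integrableOn hint.integrableOn]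
  have hneg : ∫ x in Iic (-s), Real.exp (-α * x ^ 2)
      = ∫ x in Ici s, Real.exp (-α * x ^ 2) := by
    have h1 := integral_comp_neg_Iic (c := -s) (f := fun x : ℝ => Real.exp (-α * x ^ 2))
    rw [neg_neg] at h1
    rw [integral_Ici_eq_integral_Ioi, ← h1]
    congr 1
    funext x
    rw [neg_sq]
  have hIci : ∫ x in Ici s, Real.exp (-α * x ^ 2)
      ≤ Real.exp (-α * s ^ 2) / (2 * (α * s)) := by
    have hk : 0 < 2 * α * s := by positivity
    have hpw : ∀ x ∈ Ici s, Real.exp (-α * x ^ 2)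
        ≤ Real.exp (α * s ^ 2) * Real.exp (-(x * (2 * α * s))) := by
      intro x hx
      rw [← Real.exp_add]
      apply Real.exp_le_exp.2
      have : s ≤ x := hx
      nlinarith [sq_nonneg (x - s)]
    have hintr0 : IntegrableOn (fun x : ℝ => Real.exp (-(x * (2 * α * s)))) (Ici s) := by
      rw [integrableOn_Ici_iff_integrableOn_Ioi]
      have h2 := exp_neg_integrableOn_Ioi s hk
      refine h2.congr_fun (fun x _ => by ring_nf) measurableSet_Ioi
    have hintr : IntegrableOn (fun x : ℝ => Real.exp (α * s ^ 2) * Real.exp (-(x * (2 * α * s))))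
        (Ici s) := hintr0.const_mul _
    calc ∫ x in Ici s, Real.exp (-α * x ^ 2)
        ≤ ∫ x in Ici s, Real.exp (α * s ^ 2) * Real.exp (-(x * (2 * α * s))) :=
          setIntegral_mono_on hint.integrableOn hintr measurableSet_Ici hpw
      _ = Real.exp (α * s ^ 2) * ∫ x in Ici s, Real.exp (-(x * (2 * α * s))) := by
          rw [MeasureTheory.integral_const_mul]
      _ = Real.exp (α * s ^ 2) * ((2 * α * s)⁻¹ * Real.exp (-(s * (2 * α * s)))) := by
          rw [integral_Ici_eq_integral_Ioi,
            integral_comp_mul_right_Ioi (fun y => Real.exp (-y)) s hk,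
            integral_exp_neg_Ioi, smul_eq_mul]
      _ = Real.exp (-α * s ^ 2) / (2 * (α * s)) := by
          rw [← mul_assoc _ _ (Real.exp _), mul_comm (Real.exp _) _, mul_assoc,  ← Real.exp_add]
          rw [div_eq_inv_mul]
          congr 2
          · ring
          · ring
  rw [hneg]
  calc (∫ x in Ici s, Real.exp (-α * x ^ 2)) + ∫ x in Ici s, Real.exp (-α * x ^ 2)
      = 2 * ∫ x in Ici s, Real.exp (-α * x ^ 2) := by ring
    _ ≤ 2 * (Real.exp (-α * s ^ 2) / (2 * (α * s))) := by linarith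
    _ = Real.exp (-α * s ^ 2) / (α * s) := by
        field_simp


/-- pointwise Gibbs: u log(u/v) ≥ u − v for u ≥ 0, v > 0. -/
lemma gibbs_pointwise {u v : ℝ} (hu : 0 ≤ u) (hv : 0 < v) :
    u - v ≤ u * Real.log (u / v) := by
  rcases eq_or_lt_of_le hu with h | h
  · simp [← h]
    linarith
  · have h1 : Real.log (v / u) ≤ v / u - 1 := Real.log_le_sub_one_of_pos (by positivity)
    have h2 : Real.log (u / v) = - Real.log (v / u) := by
      rw [← Real.log_inv]
      congr 1
      field_simp
    rw [h2]
    have h3 : u * (v / u - 1) = v - u := by field_simp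
    nlinarith
/-- p log(w/p) ≤ w − p for p ≥ 0, w > 0. -/
lemma gibbs_pointwise' {p w : ℝ} (hp : 0 ≤ p) (hw : 0 < w) :
    p * Real.log (w / p) ≤ w - p := by
  rcases eq_or_lt_of_le hp with h | h
  · simp [← h]; linarith
  · have h1 : Real.log (w / p) ≤ w / p - 1 := Real.log_le_sub_one_of_pos (by positivity)
    have h3 : p * (w / p - 1) = w - p := by field_simp
    nlinarith


/-- Donsker–Varadhan style bound. -/
lemma dv_bound {B : ℝ} (hB : 0 < B) (q : ℝ → ℝ) (hq : Measurable q) (hq0 : ∀ x, 0 ≤ q x)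
    (hqi : Integrable q) (hq1 : ∫ x, q x = 1)
    (hD : Integrable (fun x => q x * Real.log (q x / normalDensity B x)))
    {s : ℝ} (hs : 0 < s)
    (hJint : Integrable (fun x => Set.indicator {x : ℝ | s ≤ |x|} (fun x => x ^ 2) x * q x)) :
    ∫ x, Set.indicator {x : ℝ | s ≤ |x|} (fun x => x ^ 2) x * q x
      ≤ 8 * B ^ 2 * ((∫ x, q x * Real.log (q x / normalDensity B x))
          + (B * Real.sqrt (2 * Real.pi))⁻¹
            * (Real.exp (-(3 / (8 * B ^ 2)) * s ^ 2) / ((3 / (8 * B ^ 2)) * s))) := by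
  set α : ℝ := 3 / (8 * B ^ 2) with hα_def
  have hα : 0 < α := by positivity
  set A : Set ℝ := {x : ℝ | s ≤ |x|} with hA_def
  have hAmeas : MeasurableSet A := measurableSet_le measurable_const measurable_abs
  set c : ℝ := (B * Real.sqrt (2 * Real.pi))⁻¹ with hc_def
  have hc : 0 < c := by
    have h2π : 0 < Real.sqrt (2 * Real.pi) := Real.sqrt_pos.2 (by positivity)
    positivity
  -- pointwise inequality
  have hpw : ∀ x, Set.indicator A (fun x => x ^ 2) x * q x
      ≤ 8 * B ^ 2 * (q x * Real.log (q x / normalDensity B x)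
          + (normalDensity B x - q x)
          + Set.indicator A (fun x => c * Real.exp (-α * x ^ 2)) x) := by
    intro x
    have hφ : 0 < normalDensity B x := normalDensity_pos hB x
    by_cases hx : x ∈ A
    · rw [Set.indicator_of_mem hx, Set.indicator_of_mem hx]
      -- key: with w := c * exp(-α x²) = exp(x²/(8B²)) * φ x,
      -- q * (x²/(8B²)) ≤ q log(q/φ) + (w - q)
      set w : ℝ := c * Real.exp (-α * x ^ 2) with hw_def
      have hwpos : 0 < w := by positivity
      have hwφ : w = Real.exp (x ^ 2 / (8 * B ^ 2)) * normalDensity B x := by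
        rw [hw_def, hc_def]
        unfold normalDensity
        rw [mul_comm (Real.exp _) _, mul_assoc, ← Real.exp_add]
        congr 2
        rw [hα_def]
        field_simp
        ring
      have key : q x * (x ^ 2 / (8 * B ^ 2))
          ≤ q x * Real.log (q x / normalDensity B x) + (w - q x) := by
        rcases eq_or_lt_of_le (hq0 x) with h0 | h0
        · rw [← h0]; simp; positivity
        · have hlog : Real.log (w / q x) = x ^ 2 / (8 * B ^ 2)
              + Real.log (normalDensity B x / q x) := by
            rw [hwφ, mul_div_assoc, Real.log_mul (Real.exp_ne_zero _)
              (by positivity), Real.log_exp]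
          have h2 := gibbs_pointwise' h0.le hwpos
          rw [hlog] at h2
          have h3 : Real.log (normalDensity B x / q x)
              = - Real.log (q x / normalDensity B x) := by
            rw [← Real.log_inv]
            congr 1
            field_simp
          rw [h3] at h2
          nlinarith
      have h8B : (0:ℝ) < 8 * B ^ 2 := by positivity
      calc x ^ 2 * q x = 8 * B ^ 2 * (q x * (x ^ 2 / (8 * B ^ 2))) := by field_simp
        _ ≤ 8 * B ^ 2 * (q x * Real.log (q x / normalDensity B x) + (w - q x)) := by
            exact mul_le_mul_of_nonneg_left key h8B.le
        _ ≤ _ := by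
            apply mul_le_mul_of_nonneg_left _ h8B.le
            have : (0:ℝ) ≤ normalDensity B x := hφ.le
            rw [hw_def]
            linarith
    · rw [Set.indicator_of_notMem hx, Set.indicator_of_notMem hx]
      have h1 := gibbs_pointwise (hq0 x) hφ
      have h2 : (0:ℝ) ≤ 8 * B ^ 2 := by positivity
      rw [zero_mul]
      have h3 : 0 ≤ q x * Real.log (q x / normalDensity B x)
          + (normalDensity B x - q x) + 0 := by linarith
      calc (0:ℝ) = 8 * B ^ 2 * 0 := by ring
        _ ≤ _ := by
          apply mul_le_mul_of_nonneg_left _ h2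
          simpa using h3
  -- integrability of RHS
  have hind_int : Integrable (fun x => Set.indicator A (fun x => c * Real.exp (-α * x ^ 2)) x) :=
    (((integrable_exp_neg_mul_sq hα).const_mul c).indicator hAmeas)
  have hRHSint : Integrable (fun x => 8 * B ^ 2 * (q x * Real.log (q x / normalDensity B x)
      + (normalDensity B x - q x)
      + Set.indicator A (fun x => c * Real.exp (-α * x ^ 2)) x)) :=
    (((hD.add ((integrable_normalDensity hB).sub hqi)).add hind_int).const_mul _)
  have hIle := integral_mono hJint hRHSint hpw
  rw [MeasureTheory.integral_const_mul] at hIle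
  have i1 : Integrable (fun x => q x * Real.log (q x / normalDensity B x)
      + (normalDensity B x - q x)) := hD.add ((integrable_normalDensity hB).sub hqi)
  have i2 : Integrable (fun x => normalDensity B x - q x) :=
    (integrable_normalDensity hB).sub hqi
  have e1 : ∫ x, (q x * Real.log (q x / normalDensity B x) + (normalDensity B x - q x)
        + Set.indicator A (fun x => c * Real.exp (-α * x ^ 2)) x)
      = (∫ x, (q x * Real.log (q x / normalDensity B x) + (normalDensity B x - q x)))
        + ∫ x, Set.indicator A (fun x => c * Real.exp (-α * x ^ 2)) x :=
    integral_add i1 hind_int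
  have e2 : ∫ x, (q x * Real.log (q x / normalDensity B x) + (normalDensity B x - q x))
      = (∫ x, q x * Real.log (q x / normalDensity B x)) + ∫ x, (normalDensity B x - q x) :=
    integral_add hD i2
  have e3 : ∫ x, (normalDensity B x - q x) = (∫ x, normalDensity B x) - ∫ x, q x :=
    integral_sub (integrable_normalDensity hB) hqi
  rw [e1, e2, e3, integral_normalDensity hB, hq1, integral_indicator hAmeas,
    MeasureTheory.integral_const_mul] at hIle
  have htail := tail_bound hα hs
  calc ∫ x, Set.indicator A (fun x => x ^ 2) x * q x
      ≤ 8 * B ^ 2 * ((∫ x, q x * Real.log (q x / normalDensity B x)) + (1 - 1)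
          + c * ∫ x in A, Real.exp (-α * x ^ 2)) := hIle
    _ ≤ _ := by
        have h1 : c * (∫ x in A, Real.exp (-α * x ^ 2))
            ≤ c * (Real.exp (-α * s ^ 2) / (α * s)) := mul_le_mul_of_nonneg_left htail hc.le
        have h2 : (0:ℝ) ≤ 8 * B ^ 2 := by positivity
        apply mul_le_mul_of_nonneg_left _ h2
        simp only [sub_self, add_zero]
        linarith


variable {Ω : Type*} [MeasurableSpace Ω] {μ : Measure Ω} [IsProbabilityMeasure μ]

lemma q_int {S : Ω → ℝ} (hSm : Measurable S) {q : ℝ → ℝ} (hq : Measurable q)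
    (hq0 : ∀ x, 0 ≤ q x)
    (hdens : Measure.map S μ = volume.withDensity (fun x => ENNReal.ofReal (q x))) :
    Integrable q ∧ ∫ x, q x = 1 := by
  have hmap : IsProbabilityMeasure (Measure.map S μ) :=
    Measure.isProbabilityMeasure_map hSm.aemeasurable
  have huniv : ∫⁻ x, ENNReal.ofReal (q x) = 1 := by
    have := hmap.measure_univ
    rw [hdens, withDensity_apply _ MeasurableSet.univ, Measure.restrict_univ] at this
    exact this
  have hint : Integrable q := by
    refine ⟨hq.aestronglyMeasurable, ?_⟩
    rw [hasFiniteIntegral_iff_norm]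
    have : ∀ x, ENNReal.ofReal ‖q x‖ = ENNReal.ofReal (q x) := by
      intro x; rw [Real.norm_eq_abs, abs_of_nonneg (hq0 x)]
    simp_rw [this, huniv]
    exact ENNReal.one_lt_top
  refine ⟨hint, ?_⟩
  rw [integral_eq_lintegral_of_nonneg_ae (Filter.Eventually.of_forall hq0)
    hq.aestronglyMeasurable, huniv]
  simp

lemma push_int {S : Ω → ℝ} (hSm : Measurable S) {q : ℝ → ℝ} (hq : Measurable q)
    (hq0 : ∀ x, 0 ≤ q x)
    (hdens : Measure.map S μ = volume.withDensity (fun x => ENNReal.ofReal (q x)))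
    {h : ℝ → ℝ} (hh : Measurable h) (hint : Integrable (fun ω => h (S ω)) μ) :
    Integrable (fun x => h x * q x) ∧ ∫ ω, h (S ω) ∂μ = ∫ x, h x * q x := by
  have hmape : ∫ ω, h (S ω) ∂μ = ∫ x, h x ∂(Measure.map S μ) :=
    (integral_map hSm.aemeasurable hh.aestronglyMeasurable).symm
  have hinth : Integrable h (Measure.map S μ) := by
    rw [integrable_map_measure hh.aestronglyMeasurable hSm.aemeasurable]
    exact hint
  have hqm : Measurable (fun x => ENNReal.ofReal (q x)) := hq.ennreal_ofReal
  have hiff := integrable_withDensity_iff (μ := volume) hqm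
    (Filter.Eventually.of_forall (fun x => ENNReal.ofReal_lt_top)) (g := h)
  rw [hdens] at hinth
  rw [hiff] at hinth
  have hsimp : (fun x => h x * (ENNReal.ofReal (q x)).toReal) = fun x => h x * q x := by
    funext x; rw [ENNReal.toReal_ofReal (hq0 x)]
  rw [hsimp] at hinth
  refine ⟨hinth, ?_⟩
  rw [hmape, hdens]
  have : (fun x => ENNReal.ofReal (q x)) = (fun x => (Real.toNNReal (q x) : ℝ≥0∞)) := rfl
  rw [this, integral_withDensity_eq_integral_smul (f := fun x => (q x).toNNReal) hq.real_toNNReal h]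
  congr 1
  funext x
  rw [NNReal.smul_def, smul_eq_mul, Real.coe_toNNReal _ (hq0 x), mul_comm]


lemma log16 : (2.7725887212 : ℝ) ≤ Real.log 16 := by
  have h16 : (16:ℝ) = 2 ^ (4:ℕ) := by norm_num
  rw [h16, Real.log_pow]
  have := Real.log_two_gt_d9
  push_cast
  linarith

lemma sqrt2pi : (2.5:ℝ) ≤ Real.sqrt (2 * Real.pi) := by
  have h1 : Real.sqrt 6.25 = 2.5 := by
    rw [show (6.25:ℝ) = 2.5 ^ 2 by norm_num, Real.sqrt_sq (by norm_num)]
  rw [← h1]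
  apply Real.sqrt_le_sqrt
  have := Real.pi_gt_d6
  linarith

lemma exp34 : Real.exp (3/4) ≤ 2.53125 := by
  have e1 : Real.exp (3/4) ^ (4:ℕ) = Real.exp 3 := by
    rw [← Real.exp_nat_mul]; norm_num
  have e2 : Real.exp 3 ≤ 20.086 := by
    have h3 : Real.exp 3 = Real.exp 1 ^ (3:ℕ) := by
      rw [← Real.exp_nat_mul]; norm_num
    have h := Real.exp_one_lt_d9
    calc Real.exp 3 = Real.exp 1 ^ (3:ℕ) := h3
      _ ≤ 2.7182818286 ^ (3:ℕ) := pow_le_pow_left₀ (Real.exp_pos 1).le h.le 3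
      _ ≤ 20.086 := by norm_num
  apply le_of_pow_le_pow_left₀ (n := 4) (by norm_num) (by norm_num)
  rw [e1]
  calc Real.exp 3 ≤ 20.086 := e2
    _ ≤ 2.53125 ^ (4:ℕ) := by norm_num

lemma numeric_tail {B T : ℝ} (hB : 0 < B) (hT : 0 ≤ T)
    (hT2 : 8 * Real.log 16 * B ^ 2 < T ^ 2) :
    (B * Real.sqrt (2 * Real.pi))⁻¹
      * (Real.exp (-(3 / (8 * B ^ 2)) * (T - 2 * B) ^ 2) / ((3 / (8 * B ^ 2)) * (T - 2 * B)))
      ≤ Real.exp (-T ^ 2 / (8 * B ^ 2)) := by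
  have hB2 : (0:ℝ) < B ^ 2 := by positivity
  have hT47 : 4.7 * B < T := by
    nlinarith [log16, mul_pos hB hB]
  set s : ℝ := T - 2 * B with hs_def
  have hs27 : 2.7 * B < s := by rw [hs_def]; linarith
  have hs : 0 < s := by nlinarith
  have hsq : (0:ℝ) < Real.sqrt (2 * Real.pi) := lt_of_lt_of_le (by norm_num) sqrt2pi
  have ha : (0:ℝ) < B * Real.sqrt (2 * Real.pi) := by positivity
  have hd : (0:ℝ) < (3 / (8 * B ^ 2)) * s := by positivity
  rw [show (B * Real.sqrt (2 * Real.pi))⁻¹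
      * (Real.exp (-(3 / (8 * B ^ 2)) * s ^ 2) / ((3 / (8 * B ^ 2)) * s))
      = Real.exp (-(3 / (8 * B ^ 2)) * s ^ 2)
        / (B * Real.sqrt (2 * Real.pi) * ((3 / (8 * B ^ 2)) * s)) by
    field_simp]
  rw [div_le_iff₀ (by positivity)]
  have hexp : Real.exp (-(3 / (8 * B ^ 2)) * s ^ 2)
      = Real.exp (-T ^ 2 / (8 * B ^ 2)) * Real.exp (T ^ 2 / (8 * B ^ 2)
        - (3 / (8 * B ^ 2)) * s ^ 2) := by
    rw [← Real.exp_add]; ring_nf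
  rw [hexp, mul_assoc]
  apply mul_le_mul_of_nonneg_left _ (Real.exp_pos _).le
  -- exponent bound
  have hek : T ^ 2 / (8 * B ^ 2) - (3 / (8 * B ^ 2)) * s ^ 2 ≤ 3 / 4 := by
    have h1 : T ^ 2 / (8 * B ^ 2) - (3 / (8 * B ^ 2)) * s ^ 2
        = (T ^ 2 - 3 * s ^ 2) / (8 * B ^ 2) := by ring
    rw [h1, div_le_iff₀ (by positivity)]
    nlinarith [sq_nonneg (T - 3 * B)]
  have hKval : B * Real.sqrt (2 * Real.pi) * ((3 / (8 * B ^ 2)) * s)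
      = Real.sqrt (2 * Real.pi) * (3 * s / (8 * B)) := by
    field_simp
  calc Real.exp (T ^ 2 / (8 * B ^ 2) - (3 / (8 * B ^ 2)) * s ^ 2)
      ≤ Real.exp (3 / 4) := Real.exp_le_exp.2 hek
    _ ≤ 2.53125 := exp34
    _ ≤ 2.5 * (3 * (2.7 * B) / (8 * B)) := by
        rw [show 3 * (2.7 * B) / (8 * B) = 8.1 / 8 * (B / B) by ring,
          div_self hB.ne']
        norm_num
    _ ≤ Real.sqrt (2 * Real.pi) * (3 * s / (8 * B)) := by
        apply mul_le_mul sqrt2pi _ (by positivity) hsq.le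
        apply div_le_div_of_nonneg_right _ (by positivity)
        · linarith
    _ = B * Real.sqrt (2 * Real.pi) * ((3 / (8 * B ^ 2)) * s) := hKval.symm
    _ = B * (Real.sqrt (2 * Real.pi) * ((3 / (8 * B ^ 2)) * s)) := by ring


end Stmt14

open Stmt14

set_option maxHeartbeats 2000000 in
theorem stmt_14 {Ω : Type*} [MeasurableSpace Ω] (μ : Measure Ω) [IsProbabilityMeasure μ]
    (X Y : Ω → ℝ) (hXm : Measurable X) (hYm : Measurable Y)
    (hindep : IndepFun X Y μ)
    (hXint : Integrable X μ) (hYint : Integrable Y μ)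
    (hX2 : Integrable (fun ω => (X ω) ^ 2) μ) (hY2 : Integrable (fun ω => (Y ω) ^ 2) μ)
    (hXmean : ∫ ω, X ω ∂μ = 0) (hYmean : ∫ ω, Y ω ∂μ = 0)
    (B : ℝ) (hB : 0 < B)
    (hvarSum : variance (fun ω => X ω + Y ω) μ = B ^ 2)
    (q : ℝ → ℝ) (hq : Measurable q) (hq0 : ∀ x, 0 ≤ q x)
    (hdens : Measure.map (fun ω => X ω + Y ω) μ
        = volume.withDensity (fun x => ENNReal.ofReal (q x)))
    (hD : Integrable (fun x => q x * Real.log (q x / normalDensity B x)))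
    (T : ℝ) (hT : 0 ≤ T) :
    (1 / B ^ 2) * ∫ ω in {ω | T ≤ |X ω|}, (X ω) ^ 2 ∂μ
      ≤ 16 * (∫ x, q x * Real.log (q x / normalDensity B x))
        + 16 * Real.exp (-T ^ 2 / (8 * B ^ 2)) := by
  have hB2 : (0:ℝ) < B ^ 2 := by positivity
  have hSm : Measurable (fun ω => X ω + Y ω) := hXm.add hYm
  obtain ⟨hqi, hq1⟩ := q_int (μ := μ) hSm hq hq0 hdens
  set D := ∫ x, q x * Real.log (q x / normalDensity B x) with hD_def
  have habsint : ∀ f : Ω → ℝ, |∫ ω, f ω ∂μ| ≤ ∫ ω, |f ω| ∂μ := fun f => by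
    simpa [Real.norm_eq_abs] using norm_integral_le_integral_norm (μ := μ) f
  -- D is nonnegative
  have hDpos : 0 ≤ D := by
    have hpw : ∀ x, q x - normalDensity B x ≤ q x * Real.log (q x / normalDensity B x) :=
      fun x => gibbs_pointwise (hq0 x) (normalDensity_pos hB x)
    have i3 : Integrable (fun x => q x - normalDensity B x) :=
      hqi.sub (integrable_normalDensity hB)
    have h := integral_mono i3 hD hpw
    have e := integral_sub hqi (integrable_normalDensity hB)
    rw [e, hq1, integral_normalDensity hB, sub_self] at h
    exact h
  -- moments
  have hXL2 : MemLp X 2 μ := (memLp_two_iff_integrable_sq hXm.aestronglyMeasurable).2 hX2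
  have hYL2 : MemLp Y 2 μ := (memLp_two_iff_integrable_sq hYm.aestronglyMeasurable).2 hY2
  have hvar : variance X μ + variance Y μ = B ^ 2 := by
    rw [← hvarSum]
    exact (hindep.variance_add hXL2 hYL2).symm
  have hEX2 : ∫ ω, X ω ^ 2 ∂μ = variance X μ := by
    rw [variance_eq_sub hXL2, hXmean]
    simp
  have hEY2 : ∫ ω, Y ω ^ 2 ∂μ = variance Y μ := by
    rw [variance_eq_sub hYL2, hYmean]
    simp
  have hEX2le : ∫ ω, X ω ^ 2 ∂μ ≤ B ^ 2 := by
    have := variance_nonneg Y μ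
    linarith [hEX2, hvar]
  have hEY2le : ∫ ω, Y ω ^ 2 ∂μ ≤ B ^ 2 := by
    have := variance_nonneg X μ
    linarith [hEY2, hvar]
  -- indicator form of the LHS
  set f1 : ℝ → ℝ := Set.indicator {x : ℝ | T ≤ |x|} (fun x => x ^ 2) with hf1_def
  have f1eq : ∀ v : ℝ, f1 v = if T ≤ |v| then v ^ 2 else 0 := by
    intro v
    simp [hf1_def, Set.indicator_apply, mem_setOf_eq]
  have mf1 : Measurable f1 :=
    (measurable_id.pow_const 2).indicator (measurableSet_le measurable_const measurable_abs)
  have hf1nn : ∀ v, 0 ≤ f1 v := by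
    intro v; rw [f1eq]; split_ifs
    · exact sq_nonneg _
    · exact le_refl 0
  have hf1le : ∀ v : ℝ, f1 v ≤ v ^ 2 := by
    intro v; rw [f1eq]; split_ifs
    · exact le_refl _
    · exact sq_nonneg _
  have hsetX : MeasurableSet {ω | T ≤ |X ω|} := measurableSet_le measurable_const hXm.abs
  have intf1X : Integrable (fun ω => f1 (X ω)) μ := by
    apply hX2.mono' (mf1.comp hXm).aestronglyMeasurable
    filter_upwards with ω
    show |f1 (X ω)| ≤ X ω ^ 2
    rw [abs_of_nonneg (hf1nn _)]
    exact hf1le _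
  have hIind : ∫ ω in {ω | T ≤ |X ω|}, (X ω) ^ 2 ∂μ = ∫ ω, f1 (X ω) ∂μ := by
    rw [← integral_indicator hsetX]
    congr 1
  rw [hIind]
  set I1 := ∫ ω, f1 (X ω) ∂μ with hI1_def
  have hI1nn : 0 ≤ I1 := integral_nonneg (fun ω => hf1nn _)
  have hI1le : I1 ≤ ∫ ω, X ω ^ 2 ∂μ := integral_mono intf1X hX2 (fun ω => hf1le _)
  rcases le_or_gt (T ^ 2) (8 * Real.log 16 * B ^ 2) with hcase | hcase
  · -- easy case
    have h1 : (1 / B ^ 2) * I1 ≤ 1 := by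
      rw [div_mul_eq_mul_div, one_mul, div_le_one hB2]
      linarith
    have h2 : (1:ℝ) ≤ 16 * Real.exp (-T ^ 2 / (8 * B ^ 2)) := by
      have hle : -Real.log 16 ≤ -T ^ 2 / (8 * B ^ 2) := by
        rw [neg_div, neg_le_neg_iff, div_le_iff₀ (by positivity)]
        linarith
      have := Real.exp_le_exp.2 hle
      rw [Real.exp_neg, Real.exp_log (by norm_num : (0:ℝ) < 16)] at this
      linarith
    linarith
  · -- hard case
    have hT47 : 4.7 * B < T := by
      nlinarith [log16, mul_pos hB hB]
    have hT0 : 0 < T := by linarith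
    set s : ℝ := T - 2 * B with hs_def
    have hs : 0 < s := by rw [hs_def]; linarith
    set f2 : ℝ → ℝ := Set.indicator {x : ℝ | T ≤ |x|} id with hf2_def
    have f2eq : ∀ v : ℝ, f2 v = if T ≤ |v| then v else 0 := by
      intro v; simp [hf2_def, Set.indicator_apply, mem_setOf_eq]
    have mf2 : Measurable f2 :=
      measurable_id.indicator (measurableSet_le measurable_const measurable_abs)
    set g1 : ℝ → ℝ := Set.indicator {y : ℝ | |y| < 2 * B} (fun _ => (1:ℝ)) with hg1_def
    have g1eq : ∀ v : ℝ, g1 v = if |v| < 2 * B then 1 else 0 := by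
      intro v; simp [hg1_def, Set.indicator_apply, mem_setOf_eq]
    have mg1 : Measurable g1 :=
      measurable_const.indicator (measurableSet_lt measurable_abs measurable_const)
    set g2 : ℝ → ℝ := Set.indicator {y : ℝ | |y| < 2 * B} id with hg2_def
    have g2eq : ∀ v : ℝ, g2 v = if |v| < 2 * B then v else 0 := by
      intro v; simp [hg2_def, Set.indicator_apply, mem_setOf_eq]
    have mg2 : Measurable g2 :=
      measurable_id.indicator (measurableSet_lt measurable_abs measurable_const)
    set hS : ℝ → ℝ := Set.indicator {x : ℝ | s ≤ |x|} (fun x => x ^ 2) with hhS_def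
    have hSeq : ∀ v : ℝ, hS v = if s ≤ |v| then v ^ 2 else 0 := by
      intro v; simp [hhS_def, Set.indicator_apply, mem_setOf_eq]
    have mhS : Measurable hS :=
      (measurable_id.pow_const 2).indicator (measurableSet_le measurable_const measurable_abs)
    have hhSnn : ∀ v, 0 ≤ hS v := by
      intro v; rw [hSeq]; split_ifs
      · exact sq_nonneg _
      · exact le_refl 0
    -- integrability
    have intf2X : Integrable (fun ω => f2 (X ω)) μ := by
      apply hXint.abs.mono' (mf2.comp hXm).aestronglyMeasurable
      filter_upwards with ω
      show |f2 (X ω)| ≤ |X ω|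
      rw [f2eq]; split_ifs
      · exact le_refl _
      · simp [abs_nonneg]
    have intg1Y : Integrable (fun ω => g1 (Y ω)) μ := by
      apply (integrable_const (1:ℝ)).mono' (mg1.comp hYm).aestronglyMeasurable
      filter_upwards with ω
      show |g1 (Y ω)| ≤ 1
      rw [g1eq]; split_ifs <;> simp
    have intg2Y : Integrable (fun ω => g2 (Y ω)) μ := by
      apply hYint.abs.mono' (mg2.comp hYm).aestronglyMeasurable
      filter_upwards with ω
      show |g2 (Y ω)| ≤ |Y ω|
      rw [g2eq]; split_ifs
      · exact le_refl _
      · simp [abs_nonneg]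
    have hXY : Integrable (fun ω => X ω * Y ω) μ := hindep.integrable_mul hXint hYint
    have hS2int : Integrable (fun ω => (X ω + Y ω) ^ 2) μ := by
      have hrw : (fun ω => (X ω + Y ω) ^ 2)
          = fun ω => X ω ^ 2 + (2 * (X ω * Y ω) + Y ω ^ 2) := by
        funext ω; ring
      rw [hrw]
      exact hX2.add ((hXY.const_mul 2).add hY2)
    have inthSS : Integrable (fun ω => hS (X ω + Y ω)) μ := by
      apply hS2int.mono' (mhS.comp hSm).aestronglyMeasurable
      filter_upwards with ω
      show |hS (X ω + Y ω)| ≤ (X ω + Y ω) ^ 2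
      rw [abs_of_nonneg (hhSnn _), hSeq]
      split_ifs
      · exact le_refl _
      · exact sq_nonneg _
    -- independence products
    have indep1 : IndepFun (f1 ∘ X) (g1 ∘ Y) μ := hindep.comp mf1 mg1
    have indep2 : IndepFun (f2 ∘ X) (g2 ∘ Y) μ := hindep.comp mf2 mg2
    have intprod1 : Integrable (fun ω => f1 (X ω) * g1 (Y ω)) μ :=
      indep1.integrable_mul intf1X intg1Y
    have intprod2 : Integrable (fun ω => f2 (X ω) * g2 (Y ω)) μ :=
      indep2.integrable_mul intf2X intg2Y
    have eprod1 : ∫ ω, f1 (X ω) * g1 (Y ω) ∂μ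
        = (∫ ω, f1 (X ω) ∂μ) * ∫ ω, g1 (Y ω) ∂μ :=
      indep1.integral_fun_mul_eq_mul_integral intf1X.aestronglyMeasurable intg1Y.aestronglyMeasurable
    have eprod2 : ∫ ω, f2 (X ω) * g2 (Y ω) ∂μ
        = (∫ ω, f2 (X ω) ∂μ) * ∫ ω, g2 (Y ω) ∂μ :=
      indep2.integral_fun_mul_eq_mul_integral intf2X.aestronglyMeasurable intg2Y.aestronglyMeasurable
    -- pointwise comparison
    have hpwJ : ∀ ω, f1 (X ω) * g1 (Y ω) + 2 * (f2 (X ω) * g2 (Y ω))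
        ≤ hS (X ω + Y ω) := by
      intro ω
      rw [f1eq, f2eq, g1eq, g2eq, hSeq]
      by_cases hx : T ≤ |X ω|
      · by_cases hy : |Y ω| < 2 * B
        · have hmem : s ≤ |X ω + Y ω| := by
            have h1 : |X ω| - |-(Y ω)| ≤ |X ω - -(Y ω)| := abs_sub_abs_le_abs_sub _ _
            rw [abs_neg, sub_neg_eq_add] at h1
            rw [hs_def]
            linarith
          simp only [if_pos hx, if_pos hy, if_pos hmem]
          nlinarith [sq_nonneg (Y ω)]
        · simp only [if_neg hy]
          have h0 := hhSnn (X ω + Y ω)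
          rw [hSeq] at h0
          simpa using h0
      · simp only [if_neg hx]
        have h0 := hhSnn (X ω + Y ω)
        rw [hSeq] at h0
        simpa using h0
    have intsum : Integrable (fun ω => f1 (X ω) * g1 (Y ω)
        + 2 * (f2 (X ω) * g2 (Y ω))) μ := intprod1.add (intprod2.const_mul 2)
    have hJlow : I1 * (∫ ω, g1 (Y ω) ∂μ)
          + 2 * ((∫ ω, f2 (X ω) ∂μ) * ∫ ω, g2 (Y ω) ∂μ)
        ≤ ∫ ω, hS (X ω + Y ω) ∂μ := by
      have h := integral_mono intsum inthSS hpwJ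
      have e : ∫ ω, (f1 (X ω) * g1 (Y ω) + 2 * (f2 (X ω) * g2 (Y ω))) ∂μ
          = (∫ ω, f1 (X ω) * g1 (Y ω) ∂μ) + ∫ ω, 2 * (f2 (X ω) * g2 (Y ω)) ∂μ :=
        integral_add intprod1 (intprod2.const_mul 2)
      rw [e, MeasureTheory.integral_const_mul, eprod1, eprod2] at h
      exact h
    -- bounds on the factor integrals
    have hg1low : (3:ℝ)/4 ≤ ∫ ω, g1 (Y ω) ∂μ := by
      have hpw : ∀ ω, 1 - (Y ω) ^ 2 / (4 * B ^ 2) ≤ g1 (Y ω) := by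
        intro ω
        rw [g1eq]
        split_ifs with hv
        · have : (0:ℝ) ≤ (Y ω) ^ 2 / (4 * B ^ 2) := by positivity
          linarith
        · push_neg at hv
          rw [sub_nonpos, le_div_iff₀ (by positivity)]
          have h4 : (2*B)*(2*B) ≤ |Y ω| * |Y ω| := mul_self_le_mul_self (by positivity) hv
          nlinarith [sq_abs (Y ω), h4]
      have int1 : Integrable (fun ω => 1 - (Y ω) ^ 2 / (4 * B ^ 2)) μ :=
        (integrable_const 1).sub (hY2.div_const (4 * B ^ 2))
      have h := integral_mono int1 intg1Y hpw
      have e : ∫ ω, (1 - (Y ω) ^ 2 / (4 * B ^ 2)) ∂μ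
          = (∫ _ω, (1:ℝ) ∂μ) - ∫ ω, (Y ω) ^ 2 / (4 * B ^ 2) ∂μ :=
        integral_sub (integrable_const 1) (hY2.div_const _)
      rw [e, integral_const, integral_div, probReal_univ] at h
      simp only [ENNReal.toReal_one, smul_eq_mul, one_mul] at h
      have hq4 : (∫ ω, Y ω ^ 2 ∂μ) / (4 * B ^ 2) ≤ 1/4 := by
        rw [div_le_iff₀ (by positivity)]
        linarith
      linarith
    have hf2bound : |∫ ω, f2 (X ω) ∂μ| ≤ I1 / T := by
      calc |∫ ω, f2 (X ω) ∂μ| ≤ ∫ ω, |f2 (X ω)| ∂μ := habsint _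
        _ ≤ ∫ ω, f1 (X ω) / T ∂μ := by
            apply integral_mono intf2X.abs (intf1X.div_const T)
            intro ω
            show |f2 (X ω)| ≤ f1 (X ω) / T
            rw [f2eq, f1eq]
            split_ifs with hv
            · rw [le_div_iff₀ hT0]
              have h4 := mul_le_mul_of_nonneg_left hv (abs_nonneg (X ω))
              nlinarith [sq_abs (X ω), h4]
            · simp
        _ = I1 / T := integral_div T _
    have hg2bound : |∫ ω, g2 (Y ω) ∂μ| ≤ B / 2 := by
      have intsub : Integrable (fun ω => Y ω - g2 (Y ω)) μ := hYint.sub intg2Y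
      have hrw : ∫ ω, g2 (Y ω) ∂μ = - ∫ ω, (Y ω - g2 (Y ω)) ∂μ := by
        have e : ∫ ω, (Y ω - g2 (Y ω)) ∂μ = (∫ ω, Y ω ∂μ) - ∫ ω, g2 (Y ω) ∂μ :=
          integral_sub hYint intg2Y
        rw [e, hYmean]; ring
      rw [hrw, abs_neg]
      calc |∫ ω, (Y ω - g2 (Y ω)) ∂μ| ≤ ∫ ω, |Y ω - g2 (Y ω)| ∂μ := habsint _
        _ ≤ ∫ ω, (Y ω) ^ 2 / (2 * B) ∂μ := by
            apply integral_mono intsub.abs (hY2.div_const (2 * B))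
            intro ω
            show |Y ω - g2 (Y ω)| ≤ (Y ω) ^ 2 / (2 * B)
            rw [g2eq]
            split_ifs with hv
            · simp
              positivity
            · push_neg at hv
              rw [sub_zero, le_div_iff₀ (by positivity)]
              have h4 := mul_le_mul_of_nonneg_left hv (abs_nonneg (Y ω))
              nlinarith [sq_abs (Y ω), h4]
        _ = (∫ ω, (Y ω) ^ 2 ∂μ) / (2 * B) := integral_div _ _
        _ ≤ B / 2 := by
            rw [div_le_div_iff₀ (by positivity) (by norm_num)]
            nlinarith
    -- combine: J ≥ I1 / 2
    have hJhalf : I1 / 2 ≤ ∫ ω, hS (X ω + Y ω) ∂μ := by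
      set a := ∫ ω, f2 (X ω) ∂μ
      set b := ∫ ω, g2 (Y ω) ∂μ
      set p := ∫ ω, g1 (Y ω) ∂μ
      have h1 : I1 * (3/4) ≤ I1 * p := mul_le_mul_of_nonneg_left hg1low hI1nn
      have h2 : |a * b| ≤ (I1 / T) * (B / 2) := by
        rw [abs_mul]
        exact mul_le_mul hf2bound hg2bound (abs_nonneg _) (by positivity)
      have h3 : -(I1 / T * (B / 2)) ≤ a * b := (neg_le_neg h2).trans (neg_abs_le _)
      have h4 : I1 / T * (B / 2) = I1 * (B / T) / 2 := by ring
      have h5 : I1 * (B / T) ≤ I1 * (1/4) := by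
        apply mul_le_mul_of_nonneg_left _ hI1nn
        rw [div_le_iff₀ hT0]
        linarith
      linarith [hJlow]
    -- pushforward and DV bound
    obtain ⟨hJint, hJeq⟩ := push_int (μ := μ) hSm hq hq0 hdens mhS inthSS
    have hdv := dv_bound hB q hq hq0 hqi hq1 hD hs (by
      simpa only [hhS_def] using hJint)
    rw [hJeq] at hJhalf
    have hJle : ∫ x, hS x * q x
        ≤ 8 * B ^ 2 * (D + (B * Real.sqrt (2 * Real.pi))⁻¹
          * (Real.exp (-(3 / (8 * B ^ 2)) * s ^ 2) / ((3 / (8 * B ^ 2)) * s))) := by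
      simpa only [hhS_def, hD_def] using hdv
    have htail : (B * Real.sqrt (2 * Real.pi))⁻¹
        * (Real.exp (-(3 / (8 * B ^ 2)) * s ^ 2) / ((3 / (8 * B ^ 2)) * s))
        ≤ Real.exp (-T ^ 2 / (8 * B ^ 2)) := by
      have := numeric_tail hB hT hcase
      rwa [← hs_def] at this
    have hfinal : I1 ≤ 16 * B ^ 2 * D + 16 * B ^ 2 * Real.exp (-T ^ 2 / (8 * B ^ 2)) := by
      nlinarith [hJhalf, hJle, htail]
    have heq : (1 / B ^ 2) * (16 * B ^ 2 * D + 16 * B ^ 2 * Real.exp (-T ^ 2 / (8 * B ^ 2)))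
        = 16 * D + 16 * Real.exp (-T ^ 2 / (8 * B ^ 2)) := by
      field_simp
    calc (1 / B ^ 2) * I1
        ≤ (1 / B ^ 2) * (16 * B ^ 2 * D + 16 * B ^ 2 * Real.exp (-T ^ 2 / (8 * B ^ 2))) := by
          apply mul_le_mul_of_nonneg_left hfinal (by positivity)
      _ = 16 * D + 16 * Real.exp (-T ^ 2 / (8 * B ^ 2)) := heq
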